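/- Let p be a prime, q a positive integer divisible by p, m ≥ 3, 0 ≤ δ < m, and let the functions a^t_σ be defined as in the stated construction. Let t₁, t₂ ∈ {0,…,p^{k+δ}−1}, σ ∈ {0,…,p^k−1}, and let r, s ∈ {0,…,p^m−1} have p-ary digits satisfying r_{π_β(1)} ≠ s_{π_β(1)} for some fixed β ∈ {1,…,k}. For 1 ≤ j ≤ p−1, let σ^j ∈ {0,…,p^k−1} be the integer whose p-ary digits agree with those of σ except that the β-th digit is σ_β + j (mod p). Then ω_q^{a^{t₁}_{σ,r} − a^{t₂}_{σ,s}} + Σ_{j=1}^{p−1} ω_q^{a^{t₁}_{σ^j,r} − a^{t₂}_{σ^j,s}} = 0. -/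

import Mathlib

open Finset

/-- `i`-th (1-based) base-`p` digit of `r`, i.e. `r_i` where `r = Σ_i r_i p^(i-1)`. -/
def dig (p r i : ℕ) : ℕ := r / p ^ (i - 1) % p

/-- `ω_q^x = exp(2π√-1·x/q)` for `x ∈ ℤ_q`. -/
noncomputable def eomega (q : ℕ) (x : ZMod q) : ℂ :=
  Complex.exp (2 * Real.pi * Complex.I * (x.val : ℂ) / (q : ℂ))

/-- Aperiodic cross-correlation of two length-`N` `ℤ_q`-valued sequences at integer shift `τ`. -/
noncomputable def ccorr (q N : ℕ) (u v : ℕ → ZMod q) (τ : ℤ) : ℂ :=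
  if 0 ≤ τ then ∑ i ∈ Finset.range (N - τ.toNat), eomega q (u i - v (i + τ.toNat))
  else ∑ i ∈ Finset.range (N - (-τ).toNat), eomega q (u (i + (-τ).toNat) - v i)

/-- Aperiodic autocorrelation. -/
noncomputable def acorr (q N : ℕ) (u : ℕ → ZMod q) (τ : ℤ) : ℂ := ccorr q N u u τ

/-- Entry `a^t_{σ,r}` of the construction: with `(r_1,…,r_m)` the `p`-ary digits of `r`,
`a^t_σ(r) = (q/p) Σ_β Σ_γ r_{π_β(γ)} r_{π_β(γ+1)} + Σ_l λ_l r_l + λ_0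
 + (q/p)(Σ_β σ_β r_{π_β(1)} + Σ_β t_β r_{π_β(m_β)} + Σ_β t_{k+β} r_{m-δ+β})`. -/
def aseq (p q m δ k : ℕ) (mcard : ℕ → ℕ) (pmap : ℕ → ℕ → ℕ) (lam : ℕ → ZMod q)
    (t σ r : ℕ) : ZMod q :=
  (((q / p) * ∑ β ∈ Finset.Icc 1 k, ∑ γ ∈ Finset.Icc 1 (mcard β - 1),
      dig p r (pmap β γ) * dig p r (pmap β (γ + 1)) : ℕ) : ZMod q)
  + ∑ l ∈ Finset.Icc 1 m, lam l * (dig p r l : ZMod q) + lam 0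
  + (((q / p) * (∑ β ∈ Finset.Icc 1 k, dig p σ β * dig p r (pmap β 1)
      + ∑ β ∈ Finset.Icc 1 k, dig p t β * dig p r (pmap β (mcard β))
      + ∑ β ∈ Finset.Icc 1 δ, dig p t (k + β) * dig p r (m - δ + β)) : ℕ) : ZMod q)

/-!
Changing the `β`-th digit of `σ` by `j` adds `(q/p)·j·(r_{π_β(1)} - s_{π_β(1)})` to the exponent
`a^{t₁}_{σ,r} - a^{t₂}_{σ,s}`, since `(q/p)·x` only depends on `x mod p`. The sum is therefore
`ω_q^{a^{t₁}_{σ,r} - a^{t₂}_{σ,s}} · Σ_{j<p} w^j` for `w = ω_q^{(q/p)(r_{π_β(1)} - s_{π_β(1)})}`,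
a `p`-th root of unity different from `1`, so the geometric sum vanishes.
-/

section Character

variable {q : ℕ} [NeZero q]

lemma eomega_eq_stdAddChar (x : ZMod q) : eomega q x = ZMod.stdAddChar x := by
  rw [ZMod.stdAddChar_apply, ZMod.toCircle_apply]
  rfl

lemma eomega_add (x y : ZMod q) : eomega q (x + y) = eomega q x * eomega q y := by
  simp only [eomega_eq_stdAddChar, AddChar.map_add_eq_mul]

lemma eomega_nsmul (n : ℕ) (x : ZMod q) : eomega q (n • x) = eomega q x ^ n := by
  simp only [eomega_eq_stdAddChar, AddChar.map_nsmul_eq_pow]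

lemma eomega_eq_one_iff (x : ZMod q) : eomega q x = 1 ↔ x = 0 := by
  rw [eomega_eq_stdAddChar, ← (ZMod.stdAddChar (N := q)).map_zero_eq_one,
    ZMod.injective_stdAddChar.eq_iff]

lemma eomega_natCast_div_mul_pow {p : ℕ} (hpq : p ∣ q) (x : ZMod q) :
    eomega q (((q / p : ℕ) : ZMod q) * x) ^ p = 1 := by
  rw [← eomega_nsmul, nsmul_eq_mul, ← mul_assoc, ← Nat.cast_mul, Nat.mul_div_cancel' hpq,
    ZMod.natCast_self, zero_mul, eomega_eq_one_iff]

end Character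

section Multiple

variable {p q : ℕ}

lemma natCast_div_mul_natCast_mod (hpq : p ∣ q) (n : ℕ) :
    ((q / p : ℕ) : ZMod q) * ((n % p : ℕ) : ZMod q) = ((q / p : ℕ) : ZMod q) * n := by
  have hzero : ((q / p : ℕ) : ZMod q) * p = 0 := by
    rw [← Nat.cast_mul, Nat.div_mul_cancel hpq, ZMod.natCast_self]
  conv_rhs => rw [← Nat.mod_add_div n p]
  push_cast
  linear_combination -(n / p : ℕ) * hzero

lemma natCast_div_mul_sub_ne_zero (hq : 0 < q) (hpq : p ∣ q) {u v : ℕ} (hu : u < p) (hv : v < p)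
    (huv : u ≠ v) : ((q / p : ℕ) : ZMod q) * ((u : ZMod q) - v) ≠ 0 := by
  have hc : 0 < q / p := Nat.div_pos (Nat.le_of_dvd hq hpq) ((Nat.zero_le u).trans_lt hu)
  have hlt : ∀ n < p, q / p * n < q := fun n hn =>
    (Nat.mul_lt_mul_left hc).2 hn |>.trans_eq (Nat.div_mul_cancel hpq)
  rw [mul_sub, sub_ne_zero, ← Nat.cast_mul, ← Nat.cast_mul, Ne, ZMod.natCast_eq_natCast_iff',
    Nat.mod_eq_of_lt (hlt u hu), Nat.mod_eq_of_lt (hlt v hv)]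
  exact fun h => huv (Nat.eq_of_mul_eq_mul_left hc h)

lemma natCast_div_mul_sum_of_digit_shift (hpq : p ∣ q) {s : Finset ℕ} {f g y : ℕ → ℕ} {β j : ℕ}
    (hβ : β ∈ s) (hg : ∀ i ∈ s, g i = if i = β then (f β + j) % p else f i) :
    (((q / p) * ∑ i ∈ s, g i * y i : ℕ) : ZMod q)
      = (((q / p) * ∑ i ∈ s, f i * y i : ℕ) : ZMod q) + (((q / p) * (j * y β) : ℕ) : ZMod q) := by
  set c : ZMod q := ((q / p : ℕ) : ZMod q)
  have hterm : ∀ i ∈ s, c * g i * y i = c * f i * y i + if i = β then c * j * y β else 0 := by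
    intro i hi
    rw [hg i hi]
    split_ifs with h
    · subst h
      rw [natCast_div_mul_natCast_mod hpq]
      push_cast
      ring
    · rw [add_zero]
  push_cast
  simp only [mul_sum, ← mul_assoc]
  rw [sum_congr rfl hterm, sum_add_distrib, sum_ite_eq' s β, if_pos hβ]

end Multiple

lemma aseq_eq_add_of_digit_shift {p q m δ k : ℕ} {mcard : ℕ → ℕ} {pmap : ℕ → ℕ → ℕ}
    {lam : ℕ → ZMod q} (hpq : p ∣ q) {β σ σ' j : ℕ} (hβ : β ∈ Icc 1 k)
    (hσ' : ∀ i ∈ Icc 1 k, dig p σ' i = if i = β then (dig p σ β + j) % p else dig p σ i)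
    (t x : ℕ) :
    aseq p q m δ k mcard pmap lam t σ' x
      = aseq p q m δ k mcard pmap lam t σ x
        + (((q / p) * (j * dig p x (pmap β 1)) : ℕ) : ZMod q) := by
  have hshift :=
    natCast_div_mul_sum_of_digit_shift (q := q) (y := fun i => dig p x (pmap i 1)) hpq hβ hσ'
  simp only [aseq, Nat.cast_mul, Nat.cast_add, mul_add] at hshift ⊢
  linear_combination hshift

lemma one_add_sum_Icc_pow_eq_zero {K : Type*} [Field K] {w : K} {n : ℕ} (hn : 0 < n)
    (hw : w ≠ 1) (hwn : w ^ n = 1) : 1 + ∑ j ∈ Icc 1 (n - 1), w ^ j = 0 := by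
  obtain ⟨n, rfl⟩ : ∃ n', n = n' + 1 := ⟨n - 1, by omega⟩
  rw [Nat.add_sub_cancel, ← Ico_add_one_right_eq_Icc, ← pow_zero w,
    ← sum_range_eq_add_Ico _ hn, geom_sum_eq hw, hwn, sub_self, zero_div]

theorem szccs_shifted_digit_sum_zero_general
    (p q m δ k : ℕ) (hq : 0 < q) (hpq : p ∣ q)
    (mcard : ℕ → ℕ) (pmap : ℕ → ℕ → ℕ) (lam : ℕ → ZMod q)
    (t₁ t₂ : ℕ) (σ : ℕ) (r s : ℕ)
    (β : ℕ) (hβ : β ∈ Finset.Icc 1 k)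
    (hdiff : dig p r (pmap β 1) ≠ dig p s (pmap β 1))
    (σ' : ℕ → ℕ)
    (hσ' : ∀ j ∈ Finset.Icc 1 (p - 1), σ' j < p ^ k ∧
      ∀ i ∈ Finset.Icc 1 k,
        dig p (σ' j) i = if i = β then (dig p σ β + j) % p else dig p σ i) :
    eomega q (aseq p q m δ k mcard pmap lam t₁ σ r
        - aseq p q m δ k mcard pmap lam t₂ σ s)
      + ∑ j ∈ Finset.Icc 1 (p - 1),
        eomega q (aseq p q m δ k mcard pmap lam t₁ (σ' j) r
          - aseq p q m δ k mcard pmap lam t₂ (σ' j) s) = 0 := by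
  have : NeZero q := ⟨hq.ne'⟩
  have hp : 0 < p := Nat.pos_of_dvd_of_pos hpq hq
  set a := aseq p q m δ k mcard pmap lam
  set w := eomega q ((q / p : ℕ) * ((dig p r (pmap β 1) : ZMod q) - dig p s (pmap β 1)))
  have hterm : ∀ j ∈ Icc 1 (p - 1),
      eomega q (a t₁ (σ' j) r - a t₂ (σ' j) s) = eomega q (a t₁ σ r - a t₂ σ s) * w ^ j := by
    intro j hj
    simp only [a, aseq_eq_add_of_digit_shift hpq hβ (hσ' j hj).2]
    rw [← eomega_nsmul, ← eomega_add, nsmul_eq_mul]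
    congr 1
    push_cast
    ring
  have hw : w ≠ 1 := by
    rw [Ne, eomega_eq_one_iff]
    exact natCast_div_mul_sub_ne_zero hq hpq (Nat.mod_lt _ hp) (Nat.mod_lt _ hp) hdiff
  rw [sum_congr rfl hterm, ← mul_sum, ← mul_one_add,
    one_add_sum_Icc_pow_eq_zero hp hw (eomega_natCast_div_mul_pow hpq _), mul_zero]

/-- if the digits of `r` and `s` differ in position `π_β(1)`, and for
`1 ≤ j ≤ p-1` the index `σ^j` has the same `p`-ary digits as `σ` except that its
`β`-th digit is `σ_β + j (mod p)`, then
`ω_q^{a^{t₁}_{σ,r} - a^{t₂}_{σ,s}} + Σ_{j=1}^{p-1} ω_q^{a^{t₁}_{σ^j,r} - a^{t₂}_{σ^j,s}} = 0`. -/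
theorem szccs_shifted_digit_sum_zero
    (p q m δ k : ℕ) (hp : p.Prime) (hq : 0 < q) (hpq : p ∣ q)
    (hm : 3 ≤ m) (hδ : δ < m) (hk1 : 1 ≤ k) (hk2 : k ≤ m - δ)
    (mcard : ℕ → ℕ) (pmap : ℕ → ℕ → ℕ) (lam : ℕ → ZMod q)
    (hmcard : ∀ β ∈ Finset.Icc 1 k, 1 ≤ mcard β)
    (hmaps : ∀ β ∈ Finset.Icc 1 k, ∀ γ ∈ Finset.Icc 1 (mcard β),
      pmap β γ ∈ Finset.Icc 1 (m - δ))
    (hpart : ∀ l ∈ Finset.Icc 1 (m - δ), ∃! bg : ℕ × ℕ,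
      bg.1 ∈ Finset.Icc 1 k ∧ bg.2 ∈ Finset.Icc 1 (mcard bg.1) ∧ pmap bg.1 bg.2 = l)
    (t₁ t₂ : ℕ) (ht₁ : t₁ < p ^ (k + δ)) (ht₂ : t₂ < p ^ (k + δ))
    (σ : ℕ) (hσ : σ < p ^ k)
    (r s : ℕ) (hr : r < p ^ m) (hs : s < p ^ m)
    (β : ℕ) (hβ : β ∈ Finset.Icc 1 k)
    (hdiff : dig p r (pmap β 1) ≠ dig p s (pmap β 1))
    (σ' : ℕ → ℕ)
    (hσ' : ∀ j ∈ Finset.Icc 1 (p - 1), σ' j < p ^ k ∧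
      ∀ i ∈ Finset.Icc 1 k,
        dig p (σ' j) i = if i = β then (dig p σ β + j) % p else dig p σ i) :
    eomega q (aseq p q m δ k mcard pmap lam t₁ σ r
        - aseq p q m δ k mcard pmap lam t₂ σ s)
      + ∑ j ∈ Finset.Icc 1 (p - 1),
        eomega q (aseq p q m δ k mcard pmap lam t₁ (σ' j) r
          - aseq p q m δ k mcard pmap lam t₂ (σ' j) s) = 0 :=
  szccs_shifted_digit_sum_zero_general p q m δ k hq hpq mcard pmap lam t₁ t₂ σ r s β hβ hdiff σ' hσ'
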